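/- arXiv:1509.04043 — 3 statements merged into one kernel-verified Lean document; each statement's English description precedes it below -/
import Mathlib

section
/- Let θ > 0 and c ≥ 0 be real numbers. Then ∫₀^∞ log(1 + c/(1 + y))·(1/θ)·e^{−y/θ} dy = log(1 + c) + e^{(1+c)/θ}·E₁((1+c)/θ) − e^{1/θ}·E₁(1/θ). -/
/-!
Integrate by parts against `v = -e^{-y/θ}` with `u = log (1 + c/(1+y)) = log (1+c+y) - log (1+y)`:
the boundary term at `0` is `log (1+c)`, and `u' v` splits into `e^{-y/θ}/(1+y) - e^{-y/θ}/(1+c+y)`.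
The substitution `t = (a+y)/θ` turns `∫₀^∞ e^{-y/θ}/(a+y) dy` into `e^{a/θ} E₁(a/θ)`.
-/

open MeasureTheory Real

/-- The exponential integral function `E₁(x) = ∫ₓ^∞ e^{−t}/t dt`. -/
noncomputable def expIntegralE1 (x : ℝ) : ℝ := ∫ t in Set.Ioi x, Real.exp (-t) / t

open Set Filter Topology

theorem integral_Ioi_comp_add_right {E : Type*} [NormedAddCommGroup E] [NormedSpace ℝ E]
    (g : ℝ → E) (a d : ℝ) : ∫ x in Ioi a, g (x + d) = ∫ x in Ioi (a + d), g x := by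
  simpa using (measurePreserving_add_right volume d).setIntegral_preimage_emb
    (measurableEmbedding_addRight d) g (Ioi (a + d))

theorem integral_exp_neg_div_div_add {θ : ℝ} (hθ : 0 < θ) (a : ℝ) :
    ∫ y in Ioi 0, exp (-(y / θ)) / (a + y) = exp (a / θ) * expIntegralE1 (a / θ) := by
  -- also at `y = -a`, where both sides vanish since `x / 0 = 0`
  have hsubst : ∀ y, exp (-(y / θ)) / (a + y)
      = θ⁻¹ * exp (a / θ) * (exp (-(θ⁻¹ * (y + a))) / (θ⁻¹ * (y + a))) := by
    intro y
    rw [show -(θ⁻¹ * (y + a)) = -(y / θ) - a / θ by ring, exp_sub]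
    field_simp
    ring
  simp_rw [hsubst]
  rw [integral_const_mul, integral_Ioi_comp_add_right (fun x ↦ exp (-(θ⁻¹ * x)) / (θ⁻¹ * x)),
    zero_add, integral_comp_mul_left_Ioi (fun t ↦ exp (-t) / t) a (inv_pos.2 hθ), smul_eq_mul,
    inv_inv, ← div_eq_inv_mul, expIntegralE1]
  field_simp

theorem integrableOn_exp_neg_div_Ioi {θ : ℝ} (hθ : 0 < θ) (a : ℝ) :
    IntegrableOn (fun y ↦ exp (-(y / θ))) (Ioi a) := by
  simpa [div_eq_inv_mul] using exp_neg_integrableOn_Ioi a (inv_pos.2 hθ)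

theorem integrableOn_exp_neg_div_div_add {θ a : ℝ} (hθ : 0 < θ) (ha : 0 < a) :
    IntegrableOn (fun y ↦ exp (-(y / θ)) / (a + y)) (Ioi 0) := by
  refine ((integrableOn_exp_neg_div_Ioi hθ 0).div_const a).mono'
    (by fun_prop : Measurable _).aestronglyMeasurable ?_
  filter_upwards [ae_restrict_mem measurableSet_Ioi] with y (hy : 0 < y)
  rw [norm_of_nonneg (by positivity)]
  gcongr
  linarith

theorem tendsto_exp_neg_div_atTop {θ : ℝ} (hθ : 0 < θ) :
    Tendsto (fun y ↦ exp (-(y / θ))) atTop (𝓝 0) :=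
  tendsto_exp_neg_atTop_nhds_zero.comp (tendsto_id.atTop_div_const hθ)

theorem hasDerivAt_neg_exp_neg_div (θ x : ℝ) :
    HasDerivAt (fun y ↦ -exp (-(y / θ))) (1 / θ * exp (-(x / θ))) x :=
  (((hasDerivAt_id' x).div_const θ).fun_neg.exp).fun_neg.congr_deriv (by ring)

theorem log_one_add_div_one_add {c y : ℝ} (hy : 0 < 1 + y) (hcy : 0 < 1 + c + y) :
    log (1 + c / (1 + y)) = log (1 + c + y) - log (1 + y) := by
  rw [← log_div hcy.ne' hy.ne']
  congr 1
  field_simp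
  ring

theorem hasDerivAt_log_one_add_div_one_add {c x : ℝ} (hx : 0 < 1 + x) (hcx : 0 < 1 + c + x) :
    HasDerivAt (fun y ↦ log (1 + c / (1 + y))) (1 / (1 + c + x) - 1 / (1 + x)) x := by
  have hsub : HasDerivAt (fun y ↦ log (1 + c + y) - log (1 + y))
      (1 / (1 + c + x) - 1 / (1 + x)) x := by
    have h₁ := ((hasDerivAt_id x).const_add (1 + c)).log hcx.ne'
    have h₂ := ((hasDerivAt_id x).const_add 1).log hx.ne'
    simpa using h₁.fun_sub h₂
  refine hsub.congr_of_eventuallyEq ?_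
  filter_upwards [eventually_gt_nhds (show -1 < x by linarith),
    eventually_gt_nhds (show -1 - c < x by linarith)] with y hy hcy
  exact log_one_add_div_one_add (by linarith) (by linarith)

theorem log_one_add_div_one_add_mem_Icc {c y : ℝ} (hc : 0 ≤ c) (hy : 0 ≤ y) :
    log (1 + c / (1 + y)) ∈ Icc 0 (log (1 + c)) := by
  have hdiv_nonneg : 0 ≤ c / (1 + y) := by positivity
  have hdiv_le : c / (1 + y) ≤ c := div_le_self hc (by linarith)
  exact ⟨log_nonneg (by linarith), log_le_log (by positivity) (by linarith)⟩

theorem tendsto_log_one_add_div_one_add_atTop (c : ℝ) :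
    Tendsto (fun y ↦ log (1 + c / (1 + y))) atTop (𝓝 0) := by
  have h : Tendsto (fun y : ℝ ↦ 1 + c / (1 + y)) atTop (𝓝 1) := by
    simpa using tendsto_const_nhds.add
      (tendsto_const_nhds.div_atTop (tendsto_atTop_add_const_left _ (1 : ℝ) tendsto_id))
  simpa [Function.comp_def] using (continuousAt_log one_ne_zero).tendsto.comp h

theorem integrableOn_log_one_add_div_one_add_mul {c : ℝ} {f : ℝ → ℝ} (hc : 0 ≤ c)
    (hf : IntegrableOn f (Ioi 0)) :
    IntegrableOn (fun y ↦ log (1 + c / (1 + y)) * f y) (Ioi 0) := by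
  refine hf.bdd_mul (c := log (1 + c)) (by fun_prop : Measurable _).aestronglyMeasurable ?_
  filter_upwards [ae_restrict_mem measurableSet_Ioi] with y (hy : 0 < y)
  obtain ⟨h_nonneg, h_le⟩ := log_one_add_div_one_add_mem_Icc hc hy.le
  rwa [norm_of_nonneg h_nonneg]

/-- Closed form of Lemma 2: if `Y` is exponential with mean `θ > 0` and `c ≥ 0`, then
`E[log(1 + c/(1+Y))] = log(1+c) + e^{(1+c)/θ}E₁((1+c)/θ) − e^{1/θ}E₁(1/θ)`. -/
theorem integral_log_one_add_div_one_add_exponential (θ c : ℝ) (hθ : 0 < θ) (hc : 0 ≤ c) :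
    ∫ y in Set.Ioi (0 : ℝ), Real.log (1 + c / (1 + y)) * ((1 / θ) * Real.exp (-(y / θ))) =
      Real.log (1 + c) + Real.exp ((1 + c) / θ) * expIntegralE1 ((1 + c) / θ) -
        Real.exp (1 / θ) * expIntegralE1 (1 / θ) := by
  have hu : ∀ x : ℝ, 0 ≤ x →
      HasDerivAt (fun y ↦ log (1 + c / (1 + y))) (1 / (1 + c + x) - 1 / (1 + x)) x :=
    fun x hx ↦ hasDerivAt_log_one_add_div_one_add (by linarith) (by linarith)
  have hu'v : (fun y ↦ (1 / (1 + c + y) - 1 / (1 + y)) * -exp (-(y / θ))) =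
      fun y ↦ exp (-(y / θ)) / (1 + y) - exp (-(y / θ)) / (1 + c + y) := by
    ext y; ring
  have hint_one := integrableOn_exp_neg_div_div_add hθ one_pos
  have hint_one_add := integrableOn_exp_neg_div_div_add hθ (by linarith : 0 < 1 + c)
  have hparts := integral_Ioi_mul_deriv_eq_deriv_mul (fun x hx ↦ hu x (le_of_lt hx))
    (fun x _ ↦ hasDerivAt_neg_exp_neg_div θ x)
    (integrableOn_log_one_add_div_one_add_mul hc
      ((integrableOn_exp_neg_div_Ioi hθ 0).const_mul (1 / θ)))
    (by rw [Pi.mul_def, hu'v]; exact hint_one.sub hint_one_add)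
    (((hu 0 le_rfl).continuousAt.mul
      (hasDerivAt_neg_exp_neg_div θ 0).continuousAt).tendsto.mono_left nhdsWithin_le_nhds)
    ((tendsto_log_one_add_div_one_add_atTop c).mul (tendsto_exp_neg_div_atTop hθ).neg)
  rw [hparts, hu'v, integral_sub hint_one hint_one_add, integral_exp_neg_div_div_add hθ,
    integral_exp_neg_div_div_add hθ]
  simp only [Pi.mul_apply, add_zero, div_one, zero_div, neg_zero, exp_zero]
  ring
end

section
/- The function x ↦ log x + eˣ·E₁(x) is concave on the interval (0, ∞). -/
/-!
Write `f x = log x + eˣ E₁(x)`. Since `E₁' = -e^{-x}/x`, the two `1/x` terms cancel and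
`f' = eˣ E₁`, `f'' = eˣ E₁ - 1/x`. Bounding `1/t ≤ 1/x` under the integral gives
`E₁(x) ≤ e^{-x}/x`, i.e. `f'' ≤ 0` on `(0, ∞)`.
-/

open Set MeasureTheory Real

theorem hasDerivAt_setIntegral_Ioi {f : ℝ → ℝ} {a x : ℝ} (hf : IntegrableOn f (Ioi a))
    (hx : a < x) (hfx : ContinuousAt f x) :
    HasDerivAt (fun u => ∫ t in Ioi u, f t) (-f x) x := by
  have hFTC : HasDerivAt (fun u => ∫ t in a..u, f t) (f x) x :=
    intervalIntegral.integral_hasDerivAt_right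
      ((intervalIntegrable_iff_integrableOn_Ioc_of_le hx.le).2 (hf.mono_set Ioc_subset_Ioi_self))
      (AEStronglyMeasurable.stronglyMeasurableAtFilter_of_mem hf.aestronglyMeasurable
        (Ioi_mem_nhds hx)) hfx
  refine (((hasDerivAt_const x (∫ t in Ioi a, f t)).sub hFTC).congr_of_eventuallyEq ?_).congr_deriv
    (zero_sub _)
  filter_upwards [Ioi_mem_nhds hx] with u hu
  change _ = (∫ t in Ioi a, f t) - ∫ t in a..u, f t
  rw [← intervalIntegral.integral_Ioi_sub_Ioi hf hu.le, sub_sub_cancel]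

theorem integrableOn_exp_neg_div_Ioi_s11 {x : ℝ} (hx : 0 < x) :
    IntegrableOn (fun t => exp (-t) / t) (Ioi x) := by
  refine ((integrableOn_exp_neg_Ioi x).div_const x).mono' ?_ ?_
  · exact ((continuous_exp.comp continuous_neg).continuousOn.div continuousOn_id
      fun t ht => (hx.trans ht).ne').aestronglyMeasurable measurableSet_Ioi
  · filter_upwards [ae_restrict_mem measurableSet_Ioi] with t ht
    rw [norm_of_nonneg (div_pos (exp_pos _) (hx.trans ht)).le]
    exact div_le_div_of_nonneg_left (exp_pos _).le hx ht.le

theorem expIntegralE1_le {x : ℝ} (hx : 0 < x) : expIntegralE1 x ≤ exp (-x) / x := by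
  calc expIntegralE1 x ≤ ∫ t in Ioi x, exp (-t) / x :=
        setIntegral_mono_on (integrableOn_exp_neg_div_Ioi_s11 hx)
          ((integrableOn_exp_neg_Ioi x).div_const x) measurableSet_Ioi
          fun t ht => div_le_div_of_nonneg_left (exp_pos _).le hx (le_of_lt ht)
    _ = exp (-x) / x := by rw [integral_div, integral_exp_neg_Ioi]

theorem hasDerivAt_expIntegralE1 {x : ℝ} (hx : 0 < x) :
    HasDerivAt expIntegralE1 (-(exp (-x) / x)) x :=
  hasDerivAt_setIntegral_Ioi (integrableOn_exp_neg_div_Ioi_s11 (half_pos hx)) (half_lt_self hx)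
    ((continuous_exp.comp continuous_neg).continuousAt.div continuousAt_id hx.ne')

theorem hasDerivAt_exp_mul_expIntegralE1 {x : ℝ} (hx : 0 < x) :
    HasDerivAt (fun x => exp x * expIntegralE1 x) (exp x * expIntegralE1 x - x⁻¹) x := by
  refine ((hasDerivAt_exp x).mul (hasDerivAt_expIntegralE1 hx)).congr_deriv ?_
  rw [exp_neg]
  field_simp
  ring

theorem hasDerivAt_log_add_exp_mul_expIntegralE1 {x : ℝ} (hx : 0 < x) :
    HasDerivAt (fun x => log x + exp x * expIntegralE1 x) (exp x * expIntegralE1 x) x :=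
  ((hasDerivAt_log hx.ne').add (hasDerivAt_exp_mul_expIntegralE1 hx)).congr_deriv (by ring)

theorem exp_mul_expIntegralE1_le_inv {x : ℝ} (hx : 0 < x) : exp x * expIntegralE1 x ≤ x⁻¹ := by
  calc exp x * expIntegralE1 x ≤ exp x * (exp (-x) / x) :=
        mul_le_mul_of_nonneg_left (expIntegralE1_le hx) (exp_pos x).le
    _ = x⁻¹ := by rw [exp_neg, mul_div_assoc', mul_inv_cancel₀ (exp_pos x).ne', one_div]

/-- The rate function `x ↦ log x + eˣ E₁(x)` is concave on `(0, ∞)`. -/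
theorem concaveOn_log_add_exp_mul_expIntegralE1 :
    ConcaveOn ℝ (Set.Ioi (0 : ℝ))
      (fun x : ℝ => Real.log x + Real.exp x * expIntegralE1 x) := by
  refine concaveOn_of_hasDerivWithinAt2_nonpos (f' := fun x => exp x * expIntegralE1 x)
    (f'' := fun x => exp x * expIntegralE1 x - x⁻¹) (convex_Ioi 0)
    (fun x hx => (hasDerivAt_log_add_exp_mul_expIntegralE1 hx).continuousAt.continuousWithinAt)
    ?_ ?_ ?_ <;> rw [interior_Ioi]
  · exact fun x hx => (hasDerivAt_log_add_exp_mul_expIntegralE1 hx).hasDerivWithinAt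
  · exact fun x hx => (hasDerivAt_exp_mul_expIntegralE1 hx).hasDerivWithinAt
  · exact fun x hx => sub_nonpos.2 (exp_mul_expIntegralE1_le_inv hx)
end

section
/- Let T > 0, f_s > 0, N > 0, δ > N, ξ ≥ 0, let p₀, p₁, p_d ∈ [0, 1], and let C₀₀, C₀₁, D₁₀, D₁₁ be real constants with D₁₀ ≤ C₀₀. Define g(τ) = √(τ·f_s)·(δ/N − 1) + (δ/N)·ξ and C̃(τ) = ((T − τ)/T)·[p₀·(1 − Q(g(τ)))·C₀₀ + p₁·(1 − p_d)·C₀₁ + p₀·Q(g(τ))·D₁₀ + p₁·p_d·D₁₁], where Q(x) = ∫ₓ^∞ (2π)^{−1/2} e^{−u²/2} du is the standard Gaussian tail function. Then C̃ is concave on the interval (0, T]. -/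
open MeasureTheory Real

/-- The standard Gaussian tail function `Q(x) = ∫ₓ^∞ (2π)^{−1/2} e^{−u²/2} du`. -/
noncomputable def gaussQ (x : ℝ) : ℝ :=
  ∫ u in Set.Ioi x, (Real.sqrt (2 * Real.pi))⁻¹ * Real.exp (-u ^ 2 / 2)

/-!
Write `C̃(τ) = T⁻¹ (A (T - τ) - B (T - τ) Q(g τ))` with `B = p₀ (C₀₀ - D₁₀) ≥ 0`; it suffices
that `(T - τ) Q(g τ)` is convex on `(0, T]`. On `[0, ∞)` the tail `Q` is convex and decreasing,
since `Q' = -φ` and the density `φ` decreases there. The map `g` is a nonnegative multiple of `√τ`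
plus a nonnegative constant, hence concave, increasing and nonnegative, so `Q ∘ g` is convex,
nonnegative and decreasing. A product of two nonnegative convex functions that vary together is
convex.
-/

open Set ProbabilityTheory

lemma gaussQ_eq_setIntegral_gaussianPDFReal (x : ℝ) :
    gaussQ x = ∫ u in Ioi x, gaussianPDFReal 0 1 u := by
  simp [gaussQ, gaussianPDFReal]

lemma continuous_gaussianPDFReal (μ : ℝ) (v : NNReal) : Continuous (gaussianPDFReal μ v) := by
  unfold gaussianPDFReal; fun_prop

lemma antitoneOn_gaussianPDFReal (μ : ℝ) (v : NNReal) :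
    AntitoneOn (gaussianPDFReal μ v) (Ici μ) := by
  intro x hx y _ hxy
  simp only [gaussianPDFReal]
  gcongr
  exact sub_nonneg.2 hx

lemma hasDerivAt_gaussQ (x : ℝ) : HasDerivAt gaussQ (-gaussianPDFReal 0 1 x) x := by
  have hint := integrable_gaussianPDFReal 0 1
  have hQ : ∀ y, gaussQ y = gaussQ 0 - ∫ u in (0 : ℝ)..y, gaussianPDFReal 0 1 u := fun y => by
    simp only [gaussQ_eq_setIntegral_gaussianPDFReal]
    rw [← intervalIntegral.integral_Ioi_sub_Ioi' hint.integrableOn hint.integrableOn]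
    ring
  rw [funext hQ]
  exact (intervalIntegral.integral_hasDerivAt_right hint.intervalIntegrable
    ((continuous_gaussianPDFReal 0 1).stronglyMeasurableAtFilter _ _)
    (continuous_gaussianPDFReal 0 1).continuousAt).const_sub _

lemma gaussQ_nonneg (x : ℝ) : 0 ≤ gaussQ x := by
  rw [gaussQ_eq_setIntegral_gaussianPDFReal]
  exact setIntegral_nonneg measurableSet_Ioi fun u _ => gaussianPDFReal_nonneg 0 1 u

lemma antitone_gaussQ : Antitone gaussQ :=
  antitone_of_hasDerivAt_nonpos hasDerivAt_gaussQ fun x =>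
    neg_nonpos.2 (gaussianPDFReal_nonneg 0 1 x)

lemma convexOn_gaussQ : ConvexOn ℝ (Ici 0) gaussQ := by
  refine MonotoneOn.convexOn_of_deriv (convex_Ici 0)
    (fun x _ => (hasDerivAt_gaussQ x).continuousAt.continuousWithinAt)
    (fun x _ => (hasDerivAt_gaussQ x).differentiableAt.differentiableWithinAt) ?_
  rw [funext fun x => (hasDerivAt_gaussQ x).deriv, interior_Ici]
  exact fun x hx y hy hxy =>
    neg_le_neg (antitoneOn_gaussianPDFReal 0 1 (mem_Ici_of_Ioi hx) (mem_Ici_of_Ioi hy) hxy)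

theorem ConvexOn.comp_concaveOn_of_mapsTo {𝕜 E α β : Type*}
    [Semiring 𝕜] [PartialOrder 𝕜] [AddCommMonoid E]
    [AddCommMonoid α] [PartialOrder α] [AddCommMonoid β] [PartialOrder β]
    [SMul 𝕜 E] [SMul 𝕜 α] [SMul 𝕜 β] {s : Set E} {t : Set β} {f : E → β} {g : β → α}
    (hg : ConvexOn 𝕜 t g) (hf : ConcaveOn 𝕜 s f) (hg' : AntitoneOn g t) (hst : MapsTo f s t) :
    ConvexOn 𝕜 s (g ∘ f) :=
  ⟨hf.1, fun _ hx _ hy _ _ ha hb hab =>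
    (hg' (hg.1 (hst hx) (hst hy) ha hb hab) (hst (hf.1 hx hy ha hb hab))
      (hf.2 hx hy ha hb hab)).trans (hg.2 (hst hx) (hst hy) ha hb hab)⟩

theorem ConvexOn.const_sub_mul {s : Set ℝ} {q : ℝ → ℝ} {T : ℝ} (hq : ConvexOn ℝ s q)
    (hq_nonneg : ∀ x ∈ s, 0 ≤ q x) (hq_anti : AntitoneOn q s) (hsT : s ⊆ Iic T) :
    ConvexOn ℝ s fun x => (T - x) * q x :=
  ConvexOn.mul ((convexOn_const T hq.1).sub (concaveOn_id hq.1)) hq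
    (fun _ hx => sub_nonneg.2 (hsT hx)) hq_nonneg
    (AntitoneOn.monovaryOn (fun _ _ _ _ hxy => sub_le_sub_left hxy T) hq_anti)

theorem concaveOn_mul_const_sub (A T : ℝ) {s : Set ℝ} (hs : Convex ℝ s) :
    ConcaveOn ℝ s fun x => A * (T - x) :=
  ⟨hs, fun x _ y _ a b _ _ hab => le_of_eq <| by
    simp only [smul_eq_mul]; linear_combination (A * T) * hab⟩

theorem concaveOn_sensing_objective_general
    (T fs N δ ξ p₀ p₁ pd C₀₀ C₀₁ D₁₀ D₁₁ : ℝ)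
    (hT : 0 < T) (hfs : 0 < fs) (hN : 0 < N) (hδ : N < δ) (hξ : 0 ≤ ξ)
    (hp₀ : p₀ ∈ Set.Icc (0 : ℝ) 1) (hD : D₁₀ ≤ C₀₀)
    (g : ℝ → ℝ) (hg : ∀ τ, g τ = Real.sqrt (τ * fs) * (δ / N - 1) + (δ / N) * ξ)
    (Ctilde : ℝ → ℝ)
    (hC : ∀ τ, Ctilde τ = ((T - τ) / T) *
      (p₀ * (1 - gaussQ (g τ)) * C₀₀ + p₁ * (1 - pd) * C₀₁ +
        p₀ * gaussQ (g τ) * D₁₀ + p₁ * pd * D₁₁)) :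
    ConcaveOn ℝ (Set.Ioc (0 : ℝ) T) Ctilde := by
  set A := p₀ * C₀₀ + p₁ * (1 - pd) * C₀₁ + p₁ * pd * D₁₁
  set B := p₀ * (C₀₀ - D₁₀)
  have hB : 0 ≤ B := mul_nonneg hp₀.1 (sub_nonneg.2 hD)
  have hC' : Ctilde = fun τ => T⁻¹ • (A * (T - τ) - B • ((T - τ) * gaussQ (g τ))) := by
    funext τ; rw [hC]; simp only [smul_eq_mul, A, B]; field_simp; ring
  set a := √fs * (δ / N - 1)
  set b := δ / N * ξ
  have ha : 0 ≤ a := mul_nonneg (sqrt_nonneg fs) (sub_nonneg.2 ((one_le_div hN).2 hδ.le))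
  have hb : 0 ≤ b := mul_nonneg (div_nonneg (hN.trans hδ).le hN.le) hξ
  obtain rfl : g = fun τ => a • √τ + b := by
    funext τ; rw [hg, sqrt_mul' τ hfs.le, smul_eq_mul]; ring
  have hg_concave : ConcaveOn ℝ (Ioc 0 T) fun τ => a • √τ + b :=
    ((strictConcaveOn_sqrt.concaveOn.subset (Ioc_subset_Ioi_self.trans Ioi_subset_Ici_self)
      (convex_Ioc 0 T)).smul ha).add_const b
  have hg_mono : Monotone fun τ => a • √τ + b := fun _ _ h =>
    add_le_add_left (smul_le_smul_of_nonneg_left (sqrt_le_sqrt h) ha) b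
  have hq : ConvexOn ℝ (Ioc 0 T) fun τ => gaussQ (a • √τ + b) :=
    convexOn_gaussQ.comp_concaveOn_of_mapsTo hg_concave (antitone_gaussQ.antitoneOn _)
      fun τ _ => add_nonneg (smul_nonneg ha (sqrt_nonneg τ)) hb
  rw [hC']
  exact ((concaveOn_mul_const_sub A T (convex_Ioc 0 T)).sub
    ((hq.const_sub_mul (fun τ _ => gaussQ_nonneg _)
      ((antitone_gaussQ.comp_monotone hg_mono).antitoneOn _) Ioc_subset_Iic_self).smul hB)).smul
    (inv_nonneg.2 hT.le)

/-- Lemma 3: with `g(τ) = √(τ f_s)(δ/N − 1) + (δ/N)ξ`, the single-variable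
spectrum-sensing objective
`C̃(τ) = ((T−τ)/T)[p₀(1−Q(g(τ)))C₀₀ + p₁(1−p_d)C₀₁ + p₀Q(g(τ))D₁₀ + p₁p_d D₁₁]`
is concave on `(0, T]` whenever `T, f_s > 0`, `0 < N < δ`, `ξ ≥ 0`,
`p₀, p₁, p_d ∈ [0, 1]` and `D₁₀ ≤ C₀₀`. -/
theorem concaveOn_sensing_objective
    (T fs N δ ξ p₀ p₁ pd C₀₀ C₀₁ D₁₀ D₁₁ : ℝ)
    (hT : 0 < T) (hfs : 0 < fs) (hN : 0 < N) (hδ : N < δ) (hξ : 0 ≤ ξ)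
    (hp₀ : p₀ ∈ Set.Icc (0 : ℝ) 1) (hp₁ : p₁ ∈ Set.Icc (0 : ℝ) 1)
    (hpd : pd ∈ Set.Icc (0 : ℝ) 1) (hD : D₁₀ ≤ C₀₀)
    (g : ℝ → ℝ) (hg : ∀ τ, g τ = Real.sqrt (τ * fs) * (δ / N - 1) + (δ / N) * ξ)
    (Ctilde : ℝ → ℝ)
    (hC : ∀ τ, Ctilde τ = ((T - τ) / T) *
      (p₀ * (1 - gaussQ (g τ)) * C₀₀ + p₁ * (1 - pd) * C₀₁ +
        p₀ * gaussQ (g τ) * D₁₀ + p₁ * pd * D₁₁)) :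
    ConcaveOn ℝ (Set.Ioc (0 : ℝ) T) Ctilde :=
  concaveOn_sensing_objective_general T fs N δ ξ p₀ p₁ pd C₀₀ C₀₁ D₁₀ D₁₁ hT hfs hN hδ hξ hp₀ hD g
    hg Ctilde hC
end
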